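/- arXiv:2209.00631 — 2 statements merged into one kernel-verified Lean document; each statement's English description precedes it below -/
import Mathlib

section
/- On ℂ³, with E = x ∂ₓ + 2y ∂_y + 3z ∂_z, V = 2y ∂ₓ + (-24xy + 2z) ∂_y + (-2y² - 32xz) ∂_z, and W = 3z ∂ₓ - 9y² ∂_y - 12yz ∂_z, the Lie brackets satisfy [E, V] = V, [E, W] = 2W, and [V, W] = 24z·E + 6y·V - 40x·W. -/
open MvPolynomial

/-- Polynomial vector fields on `ℂⁿ` as tuples of coefficient polynomials. -/
abbrev VecField (n : ℕ) := Fin n → MvPolynomial (Fin n) ℂ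

/-- The directional derivative of a polynomial `g` along a vector field `Xv`. -/
noncomputable def dirDeriv {n : ℕ} (Xv : VecField n) (g : MvPolynomial (Fin n) ℂ) :
    MvPolynomial (Fin n) ℂ :=
  ∑ i, Xv i * pderiv i g

/-- The Lie bracket of polynomial vector fields, `[X,Y]ᵢ = X(Yᵢ) - Y(Xᵢ)`. -/
noncomputable def lieBracket {n : ℕ} (Xv Yv : VecField n) : VecField n :=
  fun i => dirDeriv Xv (Yv i) - dirDeriv Yv (Xv i)

namespace VecField

variable {n : ℕ} (Xv : VecField n)

noncomputable def toDerivation : Derivation ℂ (MvPolynomial (Fin n) ℂ) (MvPolynomial (Fin n) ℂ) :=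
  ∑ i, Xv i • pderiv i

theorem toDerivation_apply (g : MvPolynomial (Fin n) ℂ) : Xv.toDerivation g = dirDeriv Xv g := by
  change Derivation.coeFnAddMonoidHom (∑ i, Xv i • pderiv i) g = _
  simp [map_sum, dirDeriv]

theorem toDerivation_X (i : Fin n) : Xv.toDerivation (X i) = Xv i := by
  simp [toDerivation_apply, dirDeriv, pderiv_X, Pi.single_apply]

theorem toDerivation_ofNat (m : ℕ) [m.AtLeastTwo] :
    Xv.toDerivation (no_index (OfNat.ofNat m) : MvPolynomial (Fin n) ℂ) = 0 := by
  rw [← Nat.cast_ofNat, Derivation.map_natCast]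

end VecField

/-- On `ℂ³`, the vector fields `E, V, W` tangent to Sekiguchi's divisor satisfy
`[E,V] = V`, `[E,W] = 2W`, and `[V,W] = 24z·E + 6y·V - 40x·W`. -/
theorem sekiguchi_brackets :
    let x : MvPolynomial (Fin 3) ℂ := X 0
    let y : MvPolynomial (Fin 3) ℂ := X 1
    let z : MvPolynomial (Fin 3) ℂ := X 2
    let E : VecField 3 := ![x, 2 * y, 3 * z]
    let V : VecField 3 := ![2 * y, -24 * x * y + 2 * z, -2 * y ^ 2 - 32 * x * z]
    let W : VecField 3 := ![3 * z, -9 * y ^ 2, -12 * y * z]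
    lieBracket E V = V ∧
    lieBracket E W = (fun i => 2 * W i) ∧
    lieBracket V W = (fun i => 24 * z * E i + 6 * y * V i - 40 * x * W i) := by
  intro x y z E V W
  refine ⟨?_, ?_, ?_⟩ <;> funext i <;> fin_cases i <;>
    simp only [x, y, z, E, V, W, lieBracket, Fin.zero_eta, Fin.mk_one, Fin.reduceFinMk,
      Matrix.cons_val_zero, Matrix.cons_val_one, Matrix.cons_val, ← VecField.toDerivation_apply,
      map_add, map_sub, map_neg, Derivation.leibniz, Derivation.leibniz_pow, smul_eq_mul,
      nsmul_eq_mul, VecField.toDerivation_X, VecField.toDerivation_ofNat] <;>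
    ring
end

section
/- The determinant of the 3×3 matrix of coefficients of the vector fields E = (x, 2y, 3z), V = (2y, -24xy+2z, -2y²-32xz), W = (3z, -9y², -12yz) on ℂ³ equals a nonzero constant multiple of F = x y⁴ + y³ z + z³. -/
open MvPolynomial

/-- Saito's criterion for Sekiguchi's divisor: the determinant of the matrix of
coefficients of the logarithmic vector fields `E, V, W` equals a nonzero constant
multiple of `F = xy⁴ + y³z + z³`. -/
theorem sekiguchi_saito_criterion :
    let x : MvPolynomial (Fin 3) ℂ := X 0
    let y : MvPolynomial (Fin 3) ℂ := X 1
    let z : MvPolynomial (Fin 3) ℂ := X 2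
    let F := x * y ^ 4 + y ^ 3 * z + z ^ 3
    ∃ c : ℂ, c ≠ 0 ∧
      Matrix.det !![x, 2 * y, 3 * z;
                    2 * y, -24 * x * y + 2 * z, -2 * y ^ 2 - 32 * x * z;
                    3 * z, -9 * y ^ 2, -12 * y * z] = C c * F := by
  intro x y z F
  refine ⟨-18, by norm_num, ?_⟩
  simp only [Matrix.det_fin_three, Matrix.of_apply, Matrix.cons_val', Matrix.cons_val_zero,
    Matrix.cons_val_one, Matrix.cons_val, Matrix.cons_val_fin_one, C_neg, map_ofNat, F]
  ring
end
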